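/- For f ∈ F with f(a) = × and f(a−1) = ∘, and any i > 0: the set of b such that f^a_b is obtained from f by a legal move of weight i equals the set of b such that (f^a_{a−1})^{a−1}_b is obtained from f^a_{a−1} by a legal move of weight i+1. Moreover, for i = 0: the set of b giving a legal move from f of weight 0 starting at a equals the set of b giving a legal move of weight 1 from f^a_{a−1} starting at a−1, together with the additional element b = a−1. -/

import Mathlib

namespace KacComb

/-- Core-free diagrams: functions from `ℤ` to `{×, ∘}`, with `true` = `×`. -/
abbrev F : Type := ℤ → Bool

/-- `tally f b c` = number of `×`'s minus number of `∘`'s of `f` strictly between `b` and `c`. -/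
noncomputable def tally (f : F) (b c : ℤ) : ℤ :=
  (((Finset.Ioo b c).filter fun x => f x = true).card : ℤ) -
    (((Finset.Ioo b c).filter fun x => f x = false).card : ℤ)

/-- `move f a b` = `f^a_b`: replace the `×` at `a` by `∘` and the `∘` at `b` by `×`. -/
def move (f : F) (a b : ℤ) : F :=
  Function.update (Function.update f a false) b true

/-- The move `f ↦ f^a_b` (start `a`, end `b`) is legal. -/
def IsLegal (f : F) (a b : ℤ) : Prop :=
  b < a ∧ f a = true ∧ f b = false ∧ ∀ c : ℤ, b < c → c ≤ a → 0 ≤ tally f b c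

/-- `g` is obtained from `f` by a legal move with start `a` and end `b`. -/
def LegalMove (f g : F) (a b : ℤ) : Prop :=
  IsLegal f a b ∧ g = move f a b

/-- The cap diagram of `g` has a cap beginning at `b` and ending at `a`. -/
def HasCap (g : F) (b a : ℤ) : Prop :=
  b < a ∧ g b = true ∧ g a = false ∧ tally g b a = 0 ∧
    ∀ c : ℤ, b < c → c ≤ a → 0 ≤ tally g b c

/-- The cap diagram of `g` matches the weight diagram of `f`. -/
def Matches (g f : F) : Prop :=
  (∀ b a : ℤ, HasCap g b a →
      (f b = true ∧ f a = false) ∨ (f b = false ∧ f a = true)) ∧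
  ∀ x : ℤ, f x = true → ∃ b a : ℤ, HasCap g b a ∧ (x = b ∨ x = a)

/-- `P(f)`: the set of `g` whose cap diagram matches the weight diagram of `f`. -/
def Pset (f : F) : Set F := {g | Matches g f}

/-! Moving the `×` from `a` to `a - 1` changes no partial tally from `b` up to `a - 1`, while
the full tally from `b` to `a` also counts the `∘` at `a - 1`. Hence for `b < a - 1` a legal move
from `a` is a legal move from `a - 1` whose final tally is nonnegative, and its weight is one
less. The remaining end `b = a - 1` is always legal from `a` with weight `0`. -/

variable {f : F} {a b c : ℤ}

theorem tally_eq_sum (f : F) (b c : ℤ) :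
    tally f b c = ∑ x ∈ Finset.Ioo b c, if f x then (1 : ℤ) else -1 := by
  rw [tally, Finset.sum_ite, Finset.sum_const, Finset.sum_const]
  simp [Bool.not_eq_true, sub_eq_add_neg]

theorem tally_eq_zero_of_le (h : c ≤ b + 1) : tally f b c = 0 := by
  have hIoo : Finset.Ioo b c = ∅ := by
    ext x; simp only [Finset.mem_Ioo, Finset.notMem_empty, iff_false]; omega
  simp [tally_eq_sum, hIoo]

theorem tally_congr {g : F} (h : ∀ x ∈ Finset.Ioo b c, f x = g x) :
    tally f b c = tally g b c := by
  simp only [tally_eq_sum]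
  exact Finset.sum_congr rfl fun x hx => by rw [h x hx]

theorem tally_eq_tally_sub_one_add (h : b < c - 1) :
    tally f b c = tally f b (c - 1) + if f (c - 1) then 1 else -1 := by
  have hIoo : Finset.Ioo b c = insert (c - 1) (Finset.Ioo b (c - 1)) := by
    ext x; simp only [Finset.mem_Ioo, Finset.mem_insert]; omega
  rw [tally_eq_sum, tally_eq_sum, hIoo, Finset.sum_insert (by simp), add_comm]

theorem move_apply_of_ne {a' x : ℤ} (ha : x ≠ a) (ha' : x ≠ a') : move f a a' x = f x := by
  rw [move, Function.update_of_ne ha', Function.update_of_ne ha]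

theorem tally_move_of_le {a' : ℤ} (ha : c ≤ a) (ha' : c ≤ a') :
    tally (move f a a') b c = tally f b c :=
  tally_congr fun x hx => by
    rw [Finset.mem_Ioo] at hx
    exact move_apply_of_ne (by omega) (by omega)

theorem isLegal_sub_one (hx : f a = true) (ho : f (a - 1) = false) : IsLegal f a (a - 1) :=
  ⟨by omega, hx, ho, fun c hc hca => by rw [tally_eq_zero_of_le (by omega)]⟩

theorem tally_move_sub_one (ho : f (a - 1) = false) (hb : b < a - 1) :
    tally (move f a (a - 1)) b (a - 1) = tally f b a + 1 := by
  rw [tally_move_of_le (by omega) le_rfl, tally_eq_tally_sub_one_add hb, ho]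
  simp

theorem isLegal_iff_isLegal_move_sub_one (hx : f a = true) (ho : f (a - 1) = false)
    (hb : b < a - 1) :
    IsLegal f a b ↔ IsLegal (move f a (a - 1)) (a - 1) b ∧ 0 ≤ tally f b a := by
  have hga : move f a (a - 1) (a - 1) = true := by simp [move]
  have hgb : move f a (a - 1) b = f b := move_apply_of_ne (by omega) (by omega)
  constructor
  · rintro ⟨-, -, hfb, hpos⟩
    refine ⟨⟨hb, hga, hgb ▸ hfb, fun c hbc hca => ?_⟩, hpos a (by omega) le_rfl⟩
    rw [tally_move_of_le (by omega) hca]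
    exact hpos c hbc (by omega)
  · rintro ⟨⟨-, -, hgb', hpos⟩, hend⟩
    refine ⟨by omega, hx, hgb ▸ hgb', fun c hbc hca => ?_⟩
    rcases hca.lt_or_eq with hca | rfl
    · rw [← tally_move_of_le (a := a) (a' := a - 1) (by omega) (by omega)]
      exact hpos c hbc (by omega)
    · exact hend

theorem isLegal_tally_iff_move_sub_one (hx : f a = true) (ho : f (a - 1) = false)
    (hb : b < a - 1) {i : ℤ} (hi : 0 ≤ i) :
    IsLegal f a b ∧ tally f b a = i ↔
      IsLegal (move f a (a - 1)) (a - 1) b ∧ tally (move f a (a - 1)) b (a - 1) = i + 1 := by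
  rw [isLegal_iff_isLegal_move_sub_one hx ho hb, tally_move_sub_one ho hb, add_left_inj]
  constructor
  · rintro ⟨⟨hg, -⟩, rfl⟩
    exact ⟨hg, rfl⟩
  · rintro ⟨hg, rfl⟩
    exact ⟨⟨hg, hi⟩, rfl⟩

theorem stmt6_general (f : F) (a : ℤ)
    (hx : f a = true) (ho : f (a - 1) = false) :
    (∀ i : ℤ, 0 < i →
      {b : ℤ | IsLegal f a b ∧ tally f b a = i} =
        {b : ℤ | IsLegal (move f a (a - 1)) (a - 1) b ∧
          tally (move f a (a - 1)) b (a - 1) = i + 1}) ∧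
    {b : ℤ | IsLegal f a b ∧ tally f b a = 0} =
      {b : ℤ | IsLegal (move f a (a - 1)) (a - 1) b ∧
        tally (move f a (a - 1)) b (a - 1) = 1} ∪ {a - 1} := by
  have hend : tally f (a - 1) a = 0 := tally_eq_zero_of_le (by omega)
  refine ⟨fun i hi => Set.ext fun b => ⟨fun h => ?_, fun h => ?_⟩, Set.ext fun b => ?_⟩
  · have hb : b < a - 1 := lt_of_le_of_ne (by linarith [h.1.1]) fun hb => by
      rw [← h.2, hb, hend] at hi
      exact hi.false
    exact (isLegal_tally_iff_move_sub_one hx ho hb hi.le).1 h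
  · exact (isLegal_tally_iff_move_sub_one hx ho h.1.1 hi.le).2 h
  · simp only [Set.mem_union, Set.mem_singleton_iff, Set.mem_ofPred_eq]
    rcases lt_or_ge b (a - 1) with hb | hb
    · rw [isLegal_tally_iff_move_sub_one hx ho hb le_rfl, zero_add, or_iff_left hb.ne]
    · have hg : ¬IsLegal (move f a (a - 1)) (a - 1) b := fun h => hb.not_gt h.1
      simp only [hg, false_and, false_or]
      constructor
      · rintro ⟨hl, -⟩
        linarith [hl.1]
      · rintro rfl
        exact ⟨isLegal_sub_one hx ho, hend⟩

/-- suppose `f(a) = ×` and `f(a−1) = ∘`.  For `i > 0`, the ends of legal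
moves from `f` starting at `a` of weight `i` are exactly the ends of legal moves from
`f^a_{a−1}` starting at `a−1` of weight `i+1`; and for `i = 0` the ends of weight-zero
legal moves from `f` starting at `a` are those of weight-one legal moves from
`f^a_{a−1}` starting at `a−1`, together with `a−1` itself. -/
theorem stmt6 (f : F) (hf : {x : ℤ | f x = true}.Finite) (a : ℤ)
    (hx : f a = true) (ho : f (a - 1) = false) :
    (∀ i : ℤ, 0 < i →
      {b : ℤ | IsLegal f a b ∧ tally f b a = i} =
        {b : ℤ | IsLegal (move f a (a - 1)) (a - 1) b ∧
          tally (move f a (a - 1)) b (a - 1) = i + 1}) ∧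
    {b : ℤ | IsLegal f a b ∧ tally f b a = 0} =
      {b : ℤ | IsLegal (move f a (a - 1)) (a - 1) b ∧
        tally (move f a (a - 1)) b (a - 1) = 1} ∪ {a - 1} :=
  stmt6_general f a hx ho

end KacComb
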